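/- arXiv:2406.01184 — 2 statements merged into one kernel-verified Lean document; each statement's English description precedes it below -/
import Mathlib

section
/- Let N ≥ 1, let ρ, ρ_f, c₀, c_s be positive reals, and for j = 1,…,N let a_j := c_jρ_fF/(d_jη_k), b_j := ρ_fF/(d_jη_k) with c_j, d_j, η_k, F > 0. Suppose ν > 0 satisfies ν·(a_j − ρ_f²/ρ·N) + b_j > 0 for all j. Then the (3+N)×(3+N)-block quadratic form Q(v,σ,p,Ψ₁,…,Ψ_N) = νρ|v|² + νc_s|σ|² + νc₀|p|² + Σ_j (νa_j + b_j)|Ψ_j|² + 2νρ_f Σ_j ⟨v, Ψ_j⟩ is positive definite, with lower bound min{ν(ρ − εNρ_f), min_j(νa_j + b_j − νρ_f/ε), νc_s, νc₀} for any ε > 0 with ρ − εNρ_f > 0 and νa_j + b_j − νρ_f/ε > 0. -/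
open scoped InnerProductSpace

/-- Coercivity estimate for the material law of the augmented Biot–Allard system with `N`
auxiliary variables, with the coupling terms absorbed by Young's inequality. -/
theorem augmented_material_law_coercivity (n N : ℕ) (hN : 1 ≤ N)
    (ρ ρf c₀ cs ηk F ν ε : ℝ) (c d : Fin N → ℝ)
    (hρ : 0 < ρ) (hρf : 0 < ρf) (hc₀ : 0 < c₀) (hcs : 0 < cs)
    (hηk : 0 < ηk) (hF : 0 < F) (hν : 0 < ν) (hε : 0 < ε)
    (hc : ∀ j, 0 < c j) (hd : ∀ j, 0 < d j)
    (a : Fin N → ℝ) (b : Fin N → ℝ)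
    (ha : ∀ j, a j = c j * ρf * F / (d j * ηk))
    (hb : ∀ j, b j = ρf * F / (d j * ηk))
    (hεv : 0 < ρ - ε * N * ρf)
    (hεΨ : ∀ j, 0 < ν * a j + b j - ν * ρf / ε)
    (v : EuclideanSpace ℝ (Fin n)) (σ : EuclideanSpace ℝ (Fin n × Fin n)) (p : ℝ)
    (Ψ : Fin N → EuclideanSpace ℝ (Fin n)) :
    letI inst : Nonempty (Fin N) := Fin.pos_iff_nonempty.mp (Nat.lt_of_lt_of_le Nat.zero_lt_one hN)
    let Q : ℝ := ν * ρ * ‖v‖ ^ 2 + ν * cs * ‖σ‖ ^ 2 + ν * c₀ * |p| ^ 2 +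
      (∑ j, (ν * a j + b j) * ‖Ψ j‖ ^ 2) + 2 * ν * ρf * ∑ j, ⟪v, Ψ j⟫_ℝ
    let cmin : ℝ := min (min (ν * (ρ - ε * N * ρf))
        (Finset.univ.inf' (Finset.univ_nonempty) fun j => ν * a j + b j - ν * ρf / ε))
      (min (ν * cs) (ν * c₀))
    Q ≥ cmin * (‖v‖ ^ 2 + ‖σ‖ ^ 2 + |p| ^ 2 + ∑ j, ‖Ψ j‖ ^ 2) ∧ 0 < cmin := by
  intro Q cmin
  have hνρf : 0 < ν * ρf := mul_pos hν hρf
  -- Young's inequality termwise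
  have key : ∀ j, -(ν * ρf * ε * ‖v‖ ^ 2) - (ν * ρf / ε) * ‖Ψ j‖ ^ 2
      ≤ 2 * ν * ρf * ⟪v, Ψ j⟫_ℝ := by
    intro j
    have h1 : |⟪v, Ψ j⟫_ℝ| ≤ ‖v‖ * ‖Ψ j‖ := abs_real_inner_le_norm v (Ψ j)
    have h2 := (abs_le.mp h1).1
    have hsq : 0 ≤ (ε * ‖v‖ - ‖Ψ j‖) ^ 2 := sq_nonneg _
    have hεne : ε ≠ 0 := ne_of_gt hε
    have hid : (ε * ‖v‖ - ‖Ψ j‖) ^ 2 / ε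
        = ε * ‖v‖ ^ 2 - 2 * (‖v‖ * ‖Ψ j‖) + ‖Ψ j‖ ^ 2 / ε := by
      field_simp
      ring
    have hy : 2 * (‖v‖ * ‖Ψ j‖) ≤ ε * ‖v‖ ^ 2 + ‖Ψ j‖ ^ 2 / ε := by
      have hdiv := div_nonneg hsq hε.le
      rw [hid] at hdiv
      linarith
    have hA := mul_le_mul_of_nonneg_left hy hνρf.le
    have hB := mul_le_mul_of_nonneg_left h2 (by positivity : (0:ℝ) ≤ 2 * ν * ρf)
    have hC : ν * ρf / ε * ‖Ψ j‖ ^ 2 = ν * ρf * (‖Ψ j‖ ^ 2 / ε) := by ring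
    linarith [hA, hB, hC]
  have sum_key : ∑ j, (-(ν * ρf * ε * ‖v‖ ^ 2) - (ν * ρf / ε) * ‖Ψ j‖ ^ 2)
      ≤ 2 * ν * ρf * ∑ j, ⟪v, Ψ j⟫_ℝ := by
    rw [Finset.mul_sum]
    exact Finset.sum_le_sum fun j _ => key j
  have sum_eval : ∑ j : Fin N, (-(ν * ρf * ε * ‖v‖ ^ 2) - (ν * ρf / ε) * ‖Ψ j‖ ^ 2)
      = -((N : ℝ) * (ν * ρf * ε * ‖v‖ ^ 2)) - (ν * ρf / ε) * ∑ j, ‖Ψ j‖ ^ 2 := by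
    rw [Finset.sum_sub_distrib, Finset.sum_const, Finset.card_univ, Fintype.card_fin,
      ← Finset.mul_sum]
    push_cast
    ring
  -- bounds on cmin
  have hm1 : cmin ≤ ν * (ρ - ε * N * ρf) := le_trans (min_le_left _ _) (min_le_left _ _)
  have hm2 : ∀ j, cmin ≤ ν * a j + b j - ν * ρf / ε := fun j =>
    le_trans (le_trans (min_le_left _ _) (min_le_right _ _))
      (Finset.inf'_le _ (Finset.mem_univ j))
  have hm3 : cmin ≤ ν * cs := le_trans (min_le_right _ _) (min_le_left _ _)
  have hm4 : cmin ≤ ν * c₀ := le_trans (min_le_right _ _) (min_le_right _ _)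
  have hpos : 0 < cmin := by
    refine lt_min (lt_min (mul_pos hν hεv) ?_) (lt_min (mul_pos hν hcs) (mul_pos hν hc₀))
    exact (Finset.lt_inf'_iff _).mpr fun j _ => hεΨ j
  refine ⟨?_, hpos⟩
  have expand : ∑ j, (ν * a j + b j - ν * ρf / ε) * ‖Ψ j‖ ^ 2
      = ∑ j, (ν * a j + b j) * ‖Ψ j‖ ^ 2 - (ν * ρf / ε) * ∑ j, ‖Ψ j‖ ^ 2 := by
    rw [Finset.mul_sum, ← Finset.sum_sub_distrib]
    exact Finset.sum_congr rfl fun j _ => by ring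
  have step1 : ν * (ρ - ε * N * ρf) * ‖v‖ ^ 2 + ν * cs * ‖σ‖ ^ 2 + ν * c₀ * |p| ^ 2
      + ∑ j, (ν * a j + b j - ν * ρf / ε) * ‖Ψ j‖ ^ 2 ≤ Q := by
    have := le_trans (le_of_eq sum_eval.symm) sum_key
    simp only [Q, expand]
    nlinarith [this]
  have step2 : cmin * (‖v‖ ^ 2 + ‖σ‖ ^ 2 + |p| ^ 2 + ∑ j, ‖Ψ j‖ ^ 2)
      ≤ ν * (ρ - ε * N * ρf) * ‖v‖ ^ 2 + ν * cs * ‖σ‖ ^ 2 + ν * c₀ * |p| ^ 2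
      + ∑ j, (ν * a j + b j - ν * ρf / ε) * ‖Ψ j‖ ^ 2 := by
    have hΨ : cmin * ∑ j, ‖Ψ j‖ ^ 2 ≤ ∑ j, (ν * a j + b j - ν * ρf / ε) * ‖Ψ j‖ ^ 2 := by
      rw [Finset.mul_sum]
      exact Finset.sum_le_sum fun j _ =>
        mul_le_mul_of_nonneg_right (hm2 j) (sq_nonneg _)
    have h1 : cmin * ‖v‖ ^ 2 ≤ ν * (ρ - ε * N * ρf) * ‖v‖ ^ 2 :=
      mul_le_mul_of_nonneg_right hm1 (sq_nonneg _)
    have h2 : cmin * ‖σ‖ ^ 2 ≤ ν * cs * ‖σ‖ ^ 2 :=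
      mul_le_mul_of_nonneg_right hm3 (sq_nonneg _)
    have h3 : cmin * |p| ^ 2 ≤ ν * c₀ * |p| ^ 2 :=
      mul_le_mul_of_nonneg_right hm4 (sq_nonneg _)
    nlinarith [hΨ, h1, h2, h3]
  exact le_trans step2 step1
end

section
/- Let ν > 0, c > 0, d > 0, and let g ∈ H_ν(ℝ; ℝ^d) (the exponentially weighted Bochner space with weight e^{−2νt}). Define Ψ(t) = ∫_{−∞}^t (d/c) e^{−(t−s)/c} g(s) ds. Then Ψ ∈ H_ν(ℝ; ℝ^d) with ‖Ψ‖_ν ≤ (d/(1+νc))·‖g‖_ν, and Ψ is the unique solution in H_ν of the equation cΨ' + Ψ = d·g (with Ψ' the distributional derivative, belonging to H_ν). -/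
/-!
After multiplying by the weight, the causal formula is dominated by a convolution on the line:
`e^{-νt} ‖Ψ t‖ ≤ (k ⋆ h)(t)` with `h(s) = e^{-νs} ‖g s‖` and the kernel
`k(u) = (d/c) e^{-(ν + 1/c) u}` for `u ≥ 0`, whose `L¹` norm is `d/(1+νc)`. Young's inequality
`‖k ⋆ h‖₂ ≤ ‖k‖₁ ‖h‖₂`, proved by Cauchy–Schwarz against the measure `k(t - s) ds` and Tonelli,
gives the bound. Writing `Ψ(t) = (d/c) e^{-t/c} ∫_{-∞}^t e^{s/c} g(s) ds` gives the equation.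
The difference of two solutions is `e^{-t/c} v`, whose weighted square norm
`‖v‖² e^{-2(ν + 1/c) t}` is integrable only if `v = 0`.
-/

open MeasureTheory Real Set
open scoped ENNReal

theorem ENNReal.sq_lintegral_mul_le {α : Type*} [MeasurableSpace α] {μ : Measure α}
    {f w : α → ℝ≥0∞} (hf : AEMeasurable f μ) (hw : AEMeasurable w μ) :
    (∫⁻ a, f a * w a ∂μ) ^ 2 ≤ (∫⁻ a, f a ^ 2 * w a ∂μ) * ∫⁻ a, w a ∂μ := by
  have holder := ENNReal.lintegral_mul_norm_pow_le ((hf.pow_const 2).mul hw) hw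
    (p := 1 / 2) (q := 1 / 2) (by norm_num) (by norm_num) (by norm_num)
  have integrand (a : α) : (f a ^ 2 * w a) ^ (1 / 2 : ℝ) * w a ^ (1 / 2 : ℝ) = f a * w a := by
    rw [← ENNReal.mul_rpow_of_nonneg _ _ (by norm_num),
      show f a ^ 2 * w a * w a = (f a * w a) ^ 2 by ring, ← ENNReal.rpow_natCast,
      ← ENNReal.rpow_mul]
    norm_num
  simp only [Pi.mul_apply, integrand] at holder
  calc (∫⁻ a, f a * w a ∂μ) ^ 2
      ≤ ((∫⁻ a, f a ^ 2 * w a ∂μ) ^ (1 / 2 : ℝ) * (∫⁻ a, w a ∂μ) ^ (1 / 2 : ℝ)) ^ 2 := by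
        gcongr
    _ = (∫⁻ a, f a ^ 2 * w a ∂μ) * ∫⁻ a, w a ∂μ := by
        rw [← ENNReal.mul_rpow_of_nonneg _ _ (by norm_num), ← ENNReal.rpow_natCast,
          ← ENNReal.rpow_mul]
        norm_num

theorem lintegral_sq_lconvolution_le {G : Type*} [MeasurableSpace G] [AddCommGroup G]
    [MeasurableAdd₂ G] [MeasurableNeg G] {μ : Measure G} [SFinite μ] [μ.IsAddLeftInvariant]
    [μ.IsNegInvariant] {h k : G → ℝ≥0∞} (hh : Measurable h) (hk : Measurable k) :
    ∫⁻ x, (h ⋆ₗ[μ] k) x ^ 2 ∂μ ≤ (∫⁻ x, k x ∂μ) ^ 2 * ∫⁻ x, h x ^ 2 ∂μ := by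
  have hk_sub : Measurable fun p : G × G => k (-p.1 + p.2) := hk.comp (by fun_prop)
  have integrand : Measurable fun p : G × G => h p.2 ^ 2 * k (-p.2 + p.1) :=
    ((hh.pow_const 2).comp measurable_snd).mul (hk_sub.comp measurable_swap)
  have pointwise (x : G) :
      (h ⋆ₗ[μ] k) x ^ 2 ≤ (∫⁻ y, h y ^ 2 * k (-y + x) ∂μ) * ∫⁻ y, k y ∂μ := by
    have := ENNReal.sq_lintegral_mul_le (μ := μ) hh.aemeasurable
      (hk_sub.comp (measurable_prodMk_right (y := x))).aemeasurable
    simpa [lconvolution_def, neg_add_eq_sub, lintegral_sub_left_eq_self] using this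
  calc ∫⁻ x, (h ⋆ₗ[μ] k) x ^ 2 ∂μ
      ≤ ∫⁻ x, (∫⁻ y, h y ^ 2 * k (-y + x) ∂μ) * ∫⁻ y, k y ∂μ ∂μ := lintegral_mono pointwise
    _ = (∫⁻ y, h y ^ 2 * ∫⁻ x, k (-y + x) ∂μ ∂μ) * ∫⁻ y, k y ∂μ := by
        rw [lintegral_mul_const _ ?_,
          lintegral_lintegral_swap integrand.aemeasurable]
        · congr 1
          exact lintegral_congr fun y => lintegral_const_mul _ (hk.comp (by fun_prop))
        · exact integrand.lintegral_prod_right'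
    _ = (∫⁻ x, k x ∂μ) ^ 2 * ∫⁻ x, h x ^ 2 ∂μ := by
        simp_rw [lintegral_add_left_eq_self, lintegral_mul_const _ (hh.pow_const 2)]
        ring

theorem integrable_and_integral_le_of_lintegral_ofReal_le {α : Type*} [MeasurableSpace α]
    {μ : Measure α} {F G : α → ℝ} {C : ℝ} (hFm : AEStronglyMeasurable F μ) (hF : 0 ≤ F)
    (hG : Integrable G μ) (hG0 : 0 ≤ G) (hC : 0 ≤ C)
    (h : ∫⁻ a, ENNReal.ofReal (F a) ∂μ ≤ ENNReal.ofReal C * ∫⁻ a, ENNReal.ofReal (G a) ∂μ) :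
    Integrable F μ ∧ ∫ a, F a ∂μ ≤ C * ∫ a, G a ∂μ := by
  rw [← ofReal_integral_eq_lintegral_ofReal hG (ae_of_all _ hG0), ← ENNReal.ofReal_mul hC] at h
  have hFi : Integrable F μ :=
    ⟨hFm, (hasFiniteIntegral_iff_ofReal (ae_of_all _ hF)).2 (h.trans_lt ENNReal.ofReal_lt_top)⟩
  refine ⟨hFi, ?_⟩
  rwa [← ENNReal.ofReal_le_ofReal_iff (mul_nonneg hC (integral_nonneg hG0)),
    ofReal_integral_eq_lintegral_ofReal hFi (ae_of_all _ hF)]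

theorem not_integrable_exp_mul (b : ℝ) : ¬Integrable fun t => exp (b * t) := by
  intro h
  have hsum : Integrable fun t => exp (b * t) + exp (b * -t) := h.add h.comp_neg
  have hone : Integrable fun _ : ℝ => (1 : ℝ) := by
    refine hsum.mono' aestronglyMeasurable_const (ae_of_all _ fun t => ?_)
    rw [norm_one]
    linarith [add_one_le_exp (b * t), add_one_le_exp (b * -t)]
  have := integrable_const_iff.1 hone
  simp only [one_ne_zero, false_or] at this
  exact absurd (measure_lt_top (volume : Measure ℝ) univ) (by simp)

variable {E : Type*} [NormedAddCommGroup E]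

-- The estimates run in `ℝ≥0∞`, so no integrability has to be checked before the bound is known.
noncomputable def weightedENorm (ν : ℝ) (f : ℝ → E) (t : ℝ) : ℝ≥0∞ :=
  ‖f t‖ₑ * ENNReal.ofReal (exp (-ν * t))

theorem ofReal_sq_norm_mul_exp (ν : ℝ) (f : ℝ → E) (t : ℝ) :
    ENNReal.ofReal (‖f t‖ ^ 2 * exp (-2 * ν * t)) = weightedENorm ν f t ^ 2 := by
  rw [weightedENorm, mul_pow, ← ofReal_norm, ← ENNReal.ofReal_pow (norm_nonneg _),
    ← ENNReal.ofReal_pow (exp_pos _).le, ← ENNReal.ofReal_mul (by positivity), ← exp_nat_mul]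
  ring_nf

variable [NormedSpace ℝ E]

theorem memLp_exp_smul_iff {ν : ℝ} {f : ℝ → E} (hf : AEStronglyMeasurable f) :
    MemLp (fun t => exp (-ν * t) • f t) 2 ↔ Integrable fun t => ‖f t‖ ^ 2 * exp (-2 * ν * t) := by
  rw [memLp_two_iff_integrable_sq_norm (by fun_prop)]
  refine integrable_congr (ae_of_all _ fun t => ?_)
  dsimp only
  rw [norm_smul, norm_of_nonneg (exp_pos _).le, mul_pow, ← exp_nat_mul]
  ring_nf

theorem hasDerivAt_integral_Iic [CompleteSpace E] {f : ℝ → E} (hf : Continuous f)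
    (hint : ∀ t, IntegrableOn f (Iic t)) (t : ℝ) :
    HasDerivAt (fun u => ∫ s in Iic u, f s) (f t) t := by
  have split : (fun u => ∫ s in Iic u, f s) = fun u => (∫ s in Iic 0, f s) + ∫ s in 0..u, f s := by
    funext u
    rw [← intervalIntegral.integral_Iic_sub_Iic (hint 0) (hint u), add_sub_cancel]
  rw [split]
  exact ((hf.integral_hasStrictDerivAt 0 t).hasDerivAt).const_add _

theorem eq_exp_smul_of_hasDerivAt {c : ℝ} (hc : c ≠ 0) {y y' : ℝ → E}
    (hy : ∀ t, HasDerivAt y (y' t) t) (heq : ∀ t, c • y' t + y t = 0) (t : ℝ) :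
    y t = exp (-t / c) • y 0 := by
  have hderiv (u : ℝ) : HasDerivAt (fun u => exp (u / c) • y u) 0 u := by
    have hexp : HasDerivAt (fun u => exp (u / c)) (exp (u / c) * c⁻¹) u := by
      simpa [div_eq_mul_inv] using ((hasDerivAt_id u).div_const c).exp
    convert hexp.fun_smul (hy u) using 1
    rw [eq_neg_of_add_eq_zero_right (heq u), smul_neg, smul_smul, mul_assoc, inv_mul_cancel₀ hc,
      mul_one, add_neg_cancel]
  have hconst := is_const_of_deriv_eq_zero (fun u => (hderiv u).differentiableAt)
    (fun u => (hderiv u).deriv) t 0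
  simp only [zero_div, exp_zero, one_smul] at hconst
  rw [← hconst, smul_smul, ← exp_add, neg_div, neg_add_cancel, exp_zero, one_smul]

theorem eq_zero_of_hasDerivAt_of_integrable {c ν : ℝ} (hc : c ≠ 0) {y y' : ℝ → E}
    (hy : ∀ t, HasDerivAt y (y' t) t) (heq : ∀ t, c • y' t + y t = 0)
    (hint : Integrable fun t => ‖y t‖ ^ 2 * exp (-2 * ν * t)) : y = 0 := by
  have hsol := eq_exp_smul_of_hasDerivAt hc hy heq
  suffices y 0 = 0 by funext t; rw [hsol t, this, smul_zero]; rfl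
  by_contra hy0
  have hform (t : ℝ) : ‖y t‖ ^ 2 * exp (-2 * ν * t) = ‖y 0‖ ^ 2 * exp (-2 * (ν + c⁻¹) * t) := by
    have hexp : exp (-t / c) ^ 2 * exp (-2 * ν * t) = exp (-2 * (ν + c⁻¹) * t) := by
      rw [sq, ← exp_add, ← exp_add]
      congr 1
      field_simp
      ring
    rw [hsol t, norm_smul, norm_of_nonneg (exp_pos _).le]
    linear_combination ‖y 0‖ ^ 2 * hexp
  rw [funext hform] at hint
  refine not_integrable_exp_mul (-2 * (ν + c⁻¹)) ?_
  have hv : ‖y 0‖ ^ 2 ≠ 0 := pow_ne_zero 2 (norm_ne_zero_iff.2 hy0)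
  convert hint.const_mul (‖y 0‖ ^ 2)⁻¹ using 2 with t
  field_simp

theorem eq_of_hasDerivAt_of_integrable {c ν : ℝ} (hc : c ≠ 0) {f Φ Φ' Ψ Ψ' : ℝ → E}
    (hΦ : ∀ t, HasDerivAt Φ (Φ' t) t) (hΨ : ∀ t, HasDerivAt Ψ (Ψ' t) t)
    (hΦeq : ∀ t, c • Φ' t + Φ t = f t) (hΨeq : ∀ t, c • Ψ' t + Ψ t = f t)
    (hΦint : Integrable fun t => ‖Φ t‖ ^ 2 * exp (-2 * ν * t))
    (hΨint : Integrable fun t => ‖Ψ t‖ ^ 2 * exp (-2 * ν * t)) : Φ = Ψ := by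
  have hΦm : AEStronglyMeasurable Φ :=
    (continuous_iff_continuousAt.2 fun t => (hΦ t).continuousAt).aestronglyMeasurable
  have hΨm : AEStronglyMeasurable Ψ :=
    (continuous_iff_continuousAt.2 fun t => (hΨ t).continuousAt).aestronglyMeasurable
  have hdiff : Integrable fun t => ‖(Φ - Ψ) t‖ ^ 2 * exp (-2 * ν * t) := by
    refine (memLp_exp_smul_iff (hΦm.sub hΨm)).1 ?_
    simpa only [Pi.sub_def, smul_sub] using
      ((memLp_exp_smul_iff hΦm).2 hΦint).sub ((memLp_exp_smul_iff hΨm).2 hΨint)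
  refine sub_eq_zero.1 (eq_zero_of_hasDerivAt_of_integrable hc (y' := Φ' - Ψ')
    (fun t => (hΦ t).sub (hΨ t)) (fun t => ?_) hdiff)
  rw [Pi.sub_apply, Pi.sub_apply, smul_sub, sub_add_sub_comm, hΦeq, hΨeq, sub_self]

noncomputable def adeSolution (c d : ℝ) (g : ℝ → E) (t : ℝ) : E :=
  ∫ s in Iic t, ((d / c) * exp (-(t - s) / c)) • g s

noncomputable def adeKernel (c d ν : ℝ) : ℝ → ℝ≥0∞ :=
  (Ici 0).indicator fun u => ENNReal.ofReal (d / c * exp (-(ν + c⁻¹) * u))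

section ADE

variable {c d ν : ℝ} {g : ℝ → E}

theorem integrableOn_exp_div_smul_Iic (ha : 0 < ν + c⁻¹)
    (hgm : AEStronglyMeasurable g) (hg : Integrable fun t => ‖g t‖ ^ 2 * exp (-2 * ν * t))
    (t : ℝ) : IntegrableOn (fun s => exp (s / c) • g s) (Iic t) := by
  have hexp : MemLp (fun s => exp ((ν + c⁻¹) * s)) 2 (volume.restrict (Iic t)) := by
    refine (memLp_two_iff_integrable_sq (by fun_prop)).2 ?_
    refine (integrableOn_exp_mul_Iic (by positivity : 0 < 2 * (ν + c⁻¹)) t).congr_fun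
      (fun s _ => ?_) measurableSet_Iic
    rw [← exp_nat_mul]
    ring_nf
  have hweighted : MemLp (fun s => ‖g s‖ * exp (-ν * s)) 2 := by
    refine (memLp_two_iff_integrable_sq (by fun_prop)).2 (hg.congr (ae_of_all _ fun s => ?_))
    dsimp only
    rw [mul_pow, ← exp_nat_mul]
    ring_nf
  refine (hexp.integrable_mul (hweighted.restrict _)).mono' (by fun_prop)
    (ae_of_all _ fun s => ?_)
  rw [norm_smul, norm_of_nonneg (exp_pos _).le, Pi.mul_apply, mul_left_comm, ← exp_add, mul_comm]
  exact le_of_eq (by ring_nf)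

theorem adeSolution_eq_smul (t : ℝ) :
    adeSolution c d g t = (d / c * exp (-t / c)) • ∫ s in Iic t, exp (s / c) • g s := by
  rw [adeSolution, ← integral_smul]
  refine setIntegral_congr_fun measurableSet_Iic fun s _ => ?_
  rw [smul_smul, mul_assoc, ← exp_add]
  ring_nf

theorem hasDerivAt_adeSolution [CompleteSpace E] (ha : 0 < ν + c⁻¹)
    (hgc : Continuous g) (hg : Integrable fun t => ‖g t‖ ^ 2 * exp (-2 * ν * t)) (t : ℝ) :
    HasDerivAt (adeSolution c d g) (c⁻¹ • (d • g t - adeSolution c d g t)) t := by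
  have hF := hasDerivAt_integral_Iic (by fun_prop)
    (integrableOn_exp_div_smul_Iic ha hgc.aestronglyMeasurable hg) t
  have hφ : HasDerivAt (fun u => d / c * exp (-u / c)) (d / c * (exp (-t / c) * -c⁻¹)) t :=
    (((hasDerivAt_neg t).div_const c).exp.const_mul (d / c)).congr_deriv (by ring)
  rw [funext adeSolution_eq_smul]
  convert hφ.fun_smul hF using 1
  have hexp : exp (-t / c) * exp (t / c) = 1 := by rw [← exp_add, neg_div, neg_add_cancel, exp_zero]
  dsimp only
  rw [smul_smul, mul_assoc, hexp, mul_one]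
  module

theorem lintegral_adeKernel (hc : 0 < c) (hd : 0 ≤ d) (ha : 0 < ν + c⁻¹) :
    ∫⁻ u, adeKernel c d ν u = ENNReal.ofReal (d / (1 + ν * c)) := by
  have hint : IntegrableOn (fun u => d / c * exp (-(ν + c⁻¹) * u)) (Ici 0) :=
    ((integrableOn_exp_mul_Ioi (by linarith) (-1)).mono_set
      (Ici_subset_Ioi.2 (by norm_num))).const_mul _
  rw [adeKernel, lintegral_indicator measurableSet_Ici,
    ← ofReal_integral_eq_lintegral_ofReal hint (ae_of_all _ fun u => by positivity),
    integral_Ici_eq_integral_Ioi, integral_const_mul, integral_exp_mul_Ioi (by linarith)]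
  congr 1
  simp only [mul_zero, exp_zero]
  field_simp
  ring

theorem weightedENorm_adeSolution_le (hc : 0 < c) (hd : 0 ≤ d) (t : ℝ) :
    weightedENorm ν (adeSolution c d g) t ≤ (weightedENorm ν g ⋆ₗ adeKernel c d ν) t := by
  have integrand (s : ℝ) (hs : s ∈ Iic t) :
      ‖(d / c * exp (-(t - s) / c)) • g s‖ₑ * ENNReal.ofReal (exp (-ν * t)) =
        weightedENorm ν g s * adeKernel c d ν (-s + t) := by
    rw [weightedENorm, adeKernel, indicator_of_mem (by simpa using hs), enorm_smul,
      Real.enorm_of_nonneg (by positivity), mul_comm (ENNReal.ofReal _) ‖g s‖ₑ, mul_assoc,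
      mul_assoc, ← ENNReal.ofReal_mul (by positivity), ← ENNReal.ofReal_mul (by positivity),
      mul_left_comm, ← exp_add, mul_assoc (d / c), ← exp_add]
    ring_nf
  calc weightedENorm ν (adeSolution c d g) t
      ≤ (∫⁻ s in Iic t, ‖(d / c * exp (-(t - s) / c)) • g s‖ₑ) * ENNReal.ofReal (exp (-ν * t)) :=
        mul_le_mul_left (enorm_integral_le_lintegral_enorm _) _
    _ = ∫⁻ s in Iic t, weightedENorm ν g s * adeKernel c d ν (-s + t) := by
        rw [← lintegral_mul_const' _ _ ENNReal.ofReal_ne_top]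
        exact setLIntegral_congr_fun measurableSet_Iic integrand
    _ ≤ (weightedENorm ν g ⋆ₗ adeKernel c d ν) t := setLIntegral_le_lintegral _ _

theorem lintegral_weightedENorm_adeSolution_sq_le (hc : 0 < c) (hd : 0 ≤ d) (ha : 0 < ν + c⁻¹)
    (hg : StronglyMeasurable g) :
    ∫⁻ t, weightedENorm ν (adeSolution c d g) t ^ 2 ≤
      ENNReal.ofReal (d / (1 + ν * c)) ^ 2 * ∫⁻ t, weightedENorm ν g t ^ 2 := by
  have hgw : Measurable (weightedENorm ν g) := hg.enorm.mul (by fun_prop)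
  have hk : Measurable (adeKernel c d ν) := (by fun_prop : Measurable _).indicator measurableSet_Ici
  calc ∫⁻ t, weightedENorm ν (adeSolution c d g) t ^ 2
      ≤ ∫⁻ t, (weightedENorm ν g ⋆ₗ adeKernel c d ν) t ^ 2 :=
        lintegral_mono fun t => by gcongr; exact weightedENorm_adeSolution_le hc hd t
    _ ≤ (∫⁻ u, adeKernel c d ν u) ^ 2 * ∫⁻ t, weightedENorm ν g t ^ 2 :=
        lintegral_sq_lconvolution_le hgw hk
    _ = ENNReal.ofReal (d / (1 + ν * c)) ^ 2 * ∫⁻ t, weightedENorm ν g t ^ 2 := by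
        rw [lintegral_adeKernel hc hd ha]

theorem integrable_and_sqrt_integral_adeSolution_le [CompleteSpace E] (hc : 0 < c) (hd : 0 ≤ d)
    (ha : 0 < ν + c⁻¹) (hgc : Continuous g)
    (hg : Integrable fun t => ‖g t‖ ^ 2 * exp (-2 * ν * t)) :
    (Integrable fun t => ‖adeSolution c d g t‖ ^ 2 * exp (-2 * ν * t)) ∧
      √(∫ t, ‖adeSolution c d g t‖ ^ 2 * exp (-2 * ν * t)) ≤
        d / (1 + ν * c) * √(∫ t, ‖g t‖ ^ 2 * exp (-2 * ν * t)) := by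
  have hK : 0 ≤ d / (1 + ν * c) :=
    div_nonneg hd (by nlinarith [mul_pos hc ha, mul_inv_cancel₀ hc.ne'])
  have hΨc : Continuous (adeSolution c d g) := continuous_iff_continuousAt.2 fun t =>
    (hasDerivAt_adeSolution (d := d) ha hgc hg t).continuousAt
  obtain ⟨hint, hle⟩ := integrable_and_integral_le_of_lintegral_ofReal_le
    (F := fun t => ‖adeSolution c d g t‖ ^ 2 * exp (-2 * ν * t)) (C := (d / (1 + ν * c)) ^ 2)
    (by fun_prop) (fun t => by positivity) hg
    (fun t => by positivity) (sq_nonneg _) (by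
      simpa only [ofReal_sq_norm_mul_exp, ENNReal.ofReal_pow hK] using
        lintegral_weightedENorm_adeSolution_sq_le hc hd ha hgc.stronglyMeasurable)
  refine ⟨hint, ?_⟩
  calc √(∫ t, ‖adeSolution c d g t‖ ^ 2 * exp (-2 * ν * t))
      ≤ √((d / (1 + ν * c)) ^ 2 * ∫ t, ‖g t‖ ^ 2 * exp (-2 * ν * t)) := Real.sqrt_le_sqrt hle
    _ = d / (1 + ν * c) * √(∫ t, ‖g t‖ ^ 2 * exp (-2 * ν * t)) := by
        rw [Real.sqrt_mul (sq_nonneg _), Real.sqrt_sq hK]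

end ADE

/-- Well-posedness of a single auxiliary differential equation `cΨ' + Ψ = d·g` on the full
time axis in the weighted space `H_ν(ℝ; ℝ^d)`: the causal formula
`Ψ(t) = ∫_{−∞}^t (d/c)e^{−(t−s)/c} g(s) ds` gives the unique solution, with
`‖Ψ‖_ν ≤ (d/(1+νc))‖g‖_ν`. -/
theorem ade_wellposed_weighted (n : ℕ) (ν c d : ℝ) (hν : 0 < ν) (hc : 0 < c) (hd : 0 < d)
    (g : ℝ → EuclideanSpace ℝ (Fin n)) (hgcont : Continuous g)
    (hg : Integrable (fun t => ‖g t‖ ^ 2 * Real.exp (-2 * ν * t))) :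
    let Ψ : ℝ → EuclideanSpace ℝ (Fin n) :=
      fun t => ∫ s in Set.Iic t, ((d / c) * Real.exp (-(t - s) / c)) • g s
    (Integrable (fun t => ‖Ψ t‖ ^ 2 * Real.exp (-2 * ν * t)) ∧
      Real.sqrt (∫ t : ℝ, ‖Ψ t‖ ^ 2 * Real.exp (-2 * ν * t)) ≤
        (d / (1 + ν * c)) * Real.sqrt (∫ t : ℝ, ‖g t‖ ^ 2 * Real.exp (-2 * ν * t))) ∧
    (∀ t : ℝ, ∃ Ψ' : EuclideanSpace ℝ (Fin n),
      HasDerivAt Ψ Ψ' t ∧ c • Ψ' + Ψ t = d • g t) ∧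
    (∀ (Φ : ℝ → EuclideanSpace ℝ (Fin n)) (Φ' : ℝ → EuclideanSpace ℝ (Fin n)),
      (∀ t, HasDerivAt Φ (Φ' t) t) → (∀ t, c • Φ' t + Φ t = d • g t) →
      Integrable (fun t => ‖Φ t‖ ^ 2 * Real.exp (-2 * ν * t)) → Φ = Ψ) := by
  intro Ψ
  have ha : 0 < ν + c⁻¹ := by positivity
  have hderiv : ∀ t, HasDerivAt Ψ (c⁻¹ • (d • g t - Ψ t)) t := hasDerivAt_adeSolution ha hgcont hg
  have hsolves (t : ℝ) : c • (c⁻¹ • (d • g t - Ψ t)) + Ψ t = d • g t := by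
    rw [smul_inv_smul₀ hc.ne', sub_add_cancel]
  obtain ⟨hΨint, hΨle⟩ := integrable_and_sqrt_integral_adeSolution_le hc hd.le ha hgcont hg
  exact ⟨⟨hΨint, hΨle⟩, fun t => ⟨_, hderiv t, hsolves t⟩, fun Φ Φ' hΦ hΦeq hΦint =>
    eq_of_hasDerivAt_of_integrable hc.ne' hΦ hderiv hΦeq hsolves hΦint hΨint⟩
end
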